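/- Write ρ1 = A1·w + B1 and ρ2 = A2·w + B2 as polynomials in w, where A1 = −z³ + q910·z² + q710·z + q510, B1 = q1010·z⁶ + q810·z⁵ + q610·z⁴ + q410·z³ + q310·z² + q210·z + q110, A2 = (q99 − q91010)z² + (q79 − q71010)z + (q59 − q51010), B2 = −2z⁷ + (q910 − q101010 − λ10)z⁶ + (q89 − q81010)z⁵ + (q69 − q61010)z⁴ + (q49 − q41010)z³ + (q39 − q31010)z² + (q29 − q21010)z + (q19 − q11010). Then the resultant A1·B2 − A2·B1 of ρ1 and ρ2 with respect to w, viewed as a polynomial in z with coefficients in R, has degree exactly 10 and leading coefficient the constant 2. Consequently, for any commutative ring S, any ring homomorphism R → S, and any elements z, w ∈ S with ρ1(z,w) = 0 and ρ2(z,w) = 0, z is a root of the resulting degree-10 polynomial with constant leading coefficient 2. -/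

import Mathlib

/-!
Eliminating `w` from `ρ₁ = A₁ w + B₁` and `ρ₂ = A₂ w + B₂` gives `A₁ B₂ - A₂ B₁`, which vanishes
at every common zero. Its top term comes from `A₁ B₂`, whose leading term is
`(-z³)(-2z⁷) = 2z¹⁰`, while `deg (A₂ B₁) ≤ 2 + 6 < 10`.
-/

open Polynomial

/- The coefficient ring is `R = MvPolynomial (Fin 30) ℤ`, with the indeterminates indexed as
follows:
 0 ↦ λ10,
 1 ↦ q110, 2 ↦ q210, 3 ↦ q310, 4 ↦ q410, 5 ↦ q510, 6 ↦ q610, 7 ↦ q710, 8 ↦ q810,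
 9 ↦ q910, 10 ↦ q1010,
 11 ↦ q19, 12 ↦ q29, 13 ↦ q39, 14 ↦ q49, 15 ↦ q59, 16 ↦ q69, 17 ↦ q79, 18 ↦ q89, 19 ↦ q99,
 20 ↦ q11010, 21 ↦ q21010, 22 ↦ q31010, 23 ↦ q41010, 24 ↦ q51010, 25 ↦ q61010,
 26 ↦ q71010, 27 ↦ q81010, 28 ↦ q91010, 29 ↦ q101010. -/

/-- The `i`-th indeterminate of `R`, viewed as a constant polynomial in `z`. -/
noncomputable def v (i : Fin 30) : Polynomial (MvPolynomial (Fin 30) ℤ) :=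
  Polynomial.C (MvPolynomial.X i)

/-- `A1 = −z³ + q910·z² + q710·z + q510`, the coefficient of `w` in `ρ1`. -/
noncomputable def A1 : Polynomial (MvPolynomial (Fin 30) ℤ) :=
  -X ^ 3 + v 9 * X ^ 2 + v 7 * X + v 5

/-- `B1 = q1010·z⁶ + q810·z⁵ + q610·z⁴ + q410·z³ + q310·z² + q210·z + q110`. -/
noncomputable def B1 : Polynomial (MvPolynomial (Fin 30) ℤ) :=
  v 10 * X ^ 6 + v 8 * X ^ 5 + v 6 * X ^ 4 + v 4 * X ^ 3 + v 3 * X ^ 2 + v 2 * X + v 1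

/-- `A2 = (q99 − q91010)z² + (q79 − q71010)z + (q59 − q51010)`, the coefficient of `w` in `ρ2`. -/
noncomputable def A2 : Polynomial (MvPolynomial (Fin 30) ℤ) :=
  (v 19 - v 28) * X ^ 2 + (v 17 - v 26) * X + (v 15 - v 24)

/-- `B2 = −2z⁷ + (q910 − q101010 − λ10)z⁶ + (q89 − q81010)z⁵ + (q69 − q61010)z⁴
  + (q49 − q41010)z³ + (q39 − q31010)z² + (q29 − q21010)z + (q19 − q11010)`. -/
noncomputable def B2 : Polynomial (MvPolynomial (Fin 30) ℤ) :=
  -2 * X ^ 7 + (v 9 - v 29 - v 0) * X ^ 6 + (v 18 - v 27) * X ^ 5 + (v 16 - v 25) * X ^ 4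
    + (v 14 - v 23) * X ^ 3 + (v 13 - v 22) * X ^ 2 + (v 12 - v 21) * X + (v 11 - v 20)

/-- The resultant `A1·B2 − A2·B1` of `ρ1` and `ρ2` with respect to `w`, for the (3,11)-curve. -/
noncomputable def res311 : Polynomial (MvPolynomial (Fin 30) ℤ) := A1 * B2 - A2 * B1

theorem mul_sub_mul_eq_zero_of_linear_eq_zero {S : Type*} [CommRing S] {a₁ b₁ a₂ b₂ w : S}
    (h₁ : a₁ * w + b₁ = 0) (h₂ : a₂ * w + b₂ = 0) : a₁ * b₂ - a₂ * b₁ = 0 := by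
  linear_combination a₁ * h₂ - a₂ * h₁

theorem degree_A1 : A1.degree = 3 := by
  unfold A1 v; compute_degree!

theorem leadingCoeff_A1 : A1.leadingCoeff = -1 := by
  rw [leadingCoeff, natDegree_eq_of_degree_eq_some degree_A1]
  simp [A1, v]

theorem degree_B2 : B2.degree = 7 := by
  unfold B2 v; compute_degree!

theorem leadingCoeff_B2 : B2.leadingCoeff = -2 := by
  rw [leadingCoeff, natDegree_eq_of_degree_eq_some degree_B2]
  simp [B2, v, coeff_mul_X_pow']

theorem degree_A2_le : A2.degree ≤ 2 := by
  unfold A2 v; compute_degree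

theorem degree_B1_le : B1.degree ≤ 6 := by
  unfold B1 v; compute_degree

theorem degree_A1_mul_B2 : (A1 * B2).degree = 10 := by
  rw [degree_mul, degree_A1, degree_B2]; rfl

theorem degree_A2_mul_B1_lt : (A2 * B1).degree < (A1 * B2).degree := by
  rw [degree_A1_mul_B2]
  exact (degree_mul_le_of_le degree_A2_le degree_B1_le).trans_lt (by decide)

theorem degree_res311 : res311.degree = 10 := by
  rw [res311, degree_sub_eq_left_of_degree_lt degree_A2_mul_B1_lt, degree_A1_mul_B2]

theorem leadingCoeff_res311 : res311.leadingCoeff = 2 := by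
  rw [res311, leadingCoeff_sub_of_degree_lt degree_A2_mul_B1_lt, leadingCoeff_mul,
    leadingCoeff_A1, leadingCoeff_B2]
  norm_num

/-- the resultant has degree exactly 10 in `z` with leading coefficient the
constant `2`; consequently for any commutative ring `S`, ring homomorphism `R → S` and
elements `z, w` of `S` with `ρ1(z,w) = 0` and `ρ2(z,w) = 0`, `z` is a root of the resulting
degree-10 polynomial. -/
theorem stmt_3 :
    res311.degree = 10 ∧ res311.leadingCoeff = 2 ∧
    ∀ (S : Type*) [CommRing S] (φ : MvPolynomial (Fin 30) ℤ →+* S) (z w : S),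
      (φ (MvPolynomial.X 10) * z ^ 6 + φ (MvPolynomial.X 8) * z ^ 5
          + φ (MvPolynomial.X 6) * z ^ 4 + (φ (MvPolynomial.X 4) - w) * z ^ 3
          + (φ (MvPolynomial.X 9) * w + φ (MvPolynomial.X 3)) * z ^ 2
          + (φ (MvPolynomial.X 7) * w + φ (MvPolynomial.X 2)) * z
          + φ (MvPolynomial.X 5) * w + φ (MvPolynomial.X 1) = 0) →
      (-2 * z ^ 7 + (φ (MvPolynomial.X 9) - φ (MvPolynomial.X 29) - φ (MvPolynomial.X 0)) * z ^ 6
          + (φ (MvPolynomial.X 18) - φ (MvPolynomial.X 27)) * z ^ 5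
          + (φ (MvPolynomial.X 16) - φ (MvPolynomial.X 25)) * z ^ 4
          + (φ (MvPolynomial.X 14) - φ (MvPolynomial.X 23)) * z ^ 3
          + (φ (MvPolynomial.X 19) * w + φ (MvPolynomial.X 13) - φ (MvPolynomial.X 28) * w
              - φ (MvPolynomial.X 22)) * z ^ 2
          + (φ (MvPolynomial.X 17) * w + φ (MvPolynomial.X 12) - φ (MvPolynomial.X 26) * w
              - φ (MvPolynomial.X 21)) * z
          + φ (MvPolynomial.X 11) - φ (MvPolynomial.X 20)
          - φ (MvPolynomial.X 24) * w + φ (MvPolynomial.X 15) * w = 0) →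
      Polynomial.eval₂ φ z res311 = 0 := by
  refine ⟨degree_res311, leadingCoeff_res311, fun S _ φ z w h₁ h₂ => ?_⟩
  rw [res311, eval₂_sub, eval₂_mul, eval₂_mul]
  refine mul_sub_mul_eq_zero_of_linear_eq_zero (w := w) ?_ ?_
  · simp only [A1, B1, v, eval₂_add, eval₂_mul, eval₂_neg, eval₂_pow, eval₂_X, eval₂_C]
    linear_combination h₁
  · simp only [A2, B2, v, eval₂_add, eval₂_sub, eval₂_mul, eval₂_neg, eval₂_pow, eval₂_X,
      eval₂_C, eval₂_ofNat]
    linear_combination h₂
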